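/- In the virtual singular braid monoid VSB_n, for every 1 ≤ i ≤ n−2 one has the detour formula τ_{i+1} = (v_i v_{i−1} ⋯ v₂ v₁)(v_{i+1} v_i ⋯ v₃ v₂) τ_1 (v₂ v₃ ⋯ v_i v_{i+1})(v₁ v₂ ⋯ v_{i−1} v_i). -/

import Mathlib

/-!
From `v_k τ_{k+1} v_k = v_{k+1} τ_k v_{k+1}` and `v_k² = 1`, each `τ_{k+1}` is the conjugate of
`τ_k` by `v_k v_{k+1}`. Unrolling this down to `τ₁`, the new factor `v_{k+1}` commutes past
`v_{k-1} ⋯ v₁` by far commutativity, which sorts the conjugating word into the two descending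
blocks of the formula.
-/

namespace VSBpaper

/-- `ascV v a b = v a * v (a+1) * ⋯ * v b` (equal to `1` when `b < a`). -/
def ascV {M : Type*} [Monoid M] (v : ℕ → M) (a b : ℕ) : M :=
  ((List.range' a (b + 1 - a)).map v).prod

/-- `descV v a b = v b * v (b-1) * ⋯ * v a` (equal to `1` when `b < a`). -/
def descV {M : Type*} [Monoid M] (v : ℕ → M) (a b : ℕ) : M :=
  (((List.range' a (b + 1 - a)).map v).reverse).prod

/-- Generators of the virtual singular braid monoid on `n` strands:
`sig a` is `σ_{a+1}`, `sigInv a` is `σ_{a+1}⁻¹`, `tau a` is `τ_{a+1}`, `vir a` is `v_{a+1}`,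
so that generator indices automatically lie in `{1, …, n-1}`. -/
inductive VSBgen (n : ℕ) : Type
  | sig : Fin (n - 1) → VSBgen n
  | sigInv : Fin (n - 1) → VSBgen n
  | tau : Fin (n - 1) → VSBgen n
  | vir : Fin (n - 1) → VSBgen n

open FreeMonoid VSBgen in
/-- The defining relations of the virtual singular braid monoid `VSB n`. -/
inductive VSBrel (n : ℕ) : FreeMonoid (VSBgen n) → FreeMonoid (VSBgen n) → Prop
  /- σᵢ σᵢ⁻¹ = 1 -/
  | mul_inv (a : Fin (n - 1)) :
      VSBrel n (of (sig a) * of (sigInv a)) 1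
  /- σᵢ⁻¹ σᵢ = 1 -/
  | inv_mul (a : Fin (n - 1)) :
      VSBrel n (of (sigInv a) * of (sig a)) 1
  /- vᵢ² = 1 -/
  | v_sq (a : Fin (n - 1)) :
      VSBrel n (of (vir a) * of (vir a)) 1
  /- σᵢσⱼσᵢ = σⱼσᵢσⱼ for |i-j| = 1 -/
  | braid_sig (a b : Fin (n - 1)) (h : (a : ℕ) + 1 = b ∨ (b : ℕ) + 1 = a) :
      VSBrel n (of (sig a) * of (sig b) * of (sig a))
               (of (sig b) * of (sig a) * of (sig b))
  /- vᵢvⱼvᵢ = vⱼvᵢvⱼ for |i-j| = 1 -/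
  | braid_vir (a b : Fin (n - 1)) (h : (a : ℕ) + 1 = b ∨ (b : ℕ) + 1 = a) :
      VSBrel n (of (vir a) * of (vir b) * of (vir a))
               (of (vir b) * of (vir a) * of (vir b))
  /- vᵢσⱼvᵢ = vⱼσᵢvⱼ for |i-j| = 1 -/
  | vir_sig_vir (a b : Fin (n - 1)) (h : (a : ℕ) + 1 = b ∨ (b : ℕ) + 1 = a) :
      VSBrel n (of (vir a) * of (sig b) * of (vir a))
               (of (vir b) * of (sig a) * of (vir b))
  /- vᵢτⱼvᵢ = vⱼτᵢvⱼ for |i-j| = 1 -/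
  | vir_tau_vir (a b : Fin (n - 1)) (h : (a : ℕ) + 1 = b ∨ (b : ℕ) + 1 = a) :
      VSBrel n (of (vir a) * of (tau b) * of (vir a))
               (of (vir b) * of (tau a) * of (vir b))
  /- σᵢσⱼτᵢ = τⱼσᵢσⱼ for |i-j| = 1 -/
  | sig_sig_tau (a b : Fin (n - 1)) (h : (a : ℕ) + 1 = b ∨ (b : ℕ) + 1 = a) :
      VSBrel n (of (sig a) * of (sig b) * of (tau a))
               (of (tau b) * of (sig a) * of (sig b))
  /- σᵢτᵢ = τᵢσᵢ -/
  | sig_tau (a : Fin (n - 1)) :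
      VSBrel n (of (sig a) * of (tau a)) (of (tau a) * of (sig a))
  /- gᵢ hⱼ = hⱼ gᵢ for g, h ∈ {σ, σ⁻¹, τ, v} and |i-j| > 1 -/
  | far_comm (g h : Fin (n - 1) → VSBgen n)
      (hg : g = sig ∨ g = sigInv ∨ g = tau ∨ g = vir)
      (hh : h = sig ∨ h = sigInv ∨ h = tau ∨ h = vir)
      (a b : Fin (n - 1)) (hab : (a : ℕ) + 1 < b ∨ (b : ℕ) + 1 < a) :
      VSBrel n (of (g a) * of (h b)) (of (h b) * of (g a))

/-- The virtual singular braid monoid on `n` strands, presented by generators and relations. -/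
abbrev VSB (n : ℕ) := PresentedMonoid (VSBrel n)

/-- The real crossing `σ_k ∈ VSB n` (junk value `1` if `k ∉ {1, …, n-1}`). -/
def VSB.sigE (n : ℕ) (k : ℕ) : VSB n :=
  if h : 1 ≤ k ∧ k ≤ n - 1 then PresentedMonoid.of (VSBrel n) (VSBgen.sig ⟨k - 1, by omega⟩)
  else 1

/-- The inverse real crossing `σ_k⁻¹ ∈ VSB n` (junk value `1` if `k ∉ {1, …, n-1}`). -/
def VSB.sigInvE (n : ℕ) (k : ℕ) : VSB n :=
  if h : 1 ≤ k ∧ k ≤ n - 1 then PresentedMonoid.of (VSBrel n) (VSBgen.sigInv ⟨k - 1, by omega⟩)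
  else 1

/-- The singular crossing `τ_k ∈ VSB n` (junk value `1` if `k ∉ {1, …, n-1}`). -/
def VSB.tauE (n : ℕ) (k : ℕ) : VSB n :=
  if h : 1 ≤ k ∧ k ≤ n - 1 then PresentedMonoid.of (VSBrel n) (VSBgen.tau ⟨k - 1, by omega⟩)
  else 1

/-- The virtual crossing `v_k ∈ VSB n` (junk value `1` if `k ∉ {1, …, n-1}`). -/
def VSB.virE (n : ℕ) (k : ℕ) : VSB n :=
  if h : 1 ≤ k ∧ k ≤ n - 1 then PresentedMonoid.of (VSBrel n) (VSBgen.vir ⟨k - 1, by omega⟩)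
  else 1

section ProductsOfGenerators

variable {M : Type*} [Monoid M] (v : ℕ → M)

lemma descV_succ {a b : ℕ} (h : a ≤ b + 1) : descV v a (b + 1) = v (b + 1) * descV v a b := by
  rw [descV, descV, show b + 1 + 1 - a = b + 1 - a + 1 by omega, List.range'_1_concat,
    show a + (b + 1 - a) = b + 1 by omega]
  simp

lemma ascV_succ {a b : ℕ} (h : a ≤ b + 1) : ascV v a (b + 1) = ascV v a b * v (b + 1) := by
  rw [ascV, ascV, show b + 1 + 1 - a = b + 1 - a + 1 by omega, List.range'_1_concat,
    show a + (b + 1 - a) = b + 1 by omega]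
  simp

variable {v}

lemma commute_descV_left {a b : ℕ} {x : M} (h : ∀ j, a ≤ j → j ≤ b → Commute (v j) x) :
    Commute (descV v a b) x :=
  Commute.list_prod_left _ _ fun y hy => by
    obtain ⟨j, hj, rfl⟩ := List.mem_map.1 (List.mem_reverse.1 hy)
    obtain ⟨hj₁, hj₂⟩ := List.mem_range'_1.1 hj
    exact h j hj₁ (by omega)

lemma commute_ascV_left {a b : ℕ} {x : M} (h : ∀ j, a ≤ j → j ≤ b → Commute (v j) x) :
    Commute (ascV v a b) x :=
  Commute.list_prod_left _ _ fun y hy => by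
    obtain ⟨j, hj, rfl⟩ := List.mem_map.1 hy
    obtain ⟨hj₁, hj₂⟩ := List.mem_range'_1.1 hj
    exact h j hj₁ (by omega)

lemma descV_mul_descV_succ {a i : ℕ} (ha : a ≤ i + 1) (hc : Commute (descV v a i) (v (i + 2))) :
    descV v a (i + 1) * descV v (a + 1) (i + 2) =
      v (i + 1) * v (i + 2) * (descV v a i * descV v (a + 1) (i + 1)) := by
  rw [descV_succ v ha, descV_succ v (by omega : a + 1 ≤ i + 1 + 1), mul_assoc, ← mul_assoc _ (v _),
    hc.eq]
  simp only [mul_assoc]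

lemma ascV_succ_mul_ascV {a i : ℕ} (ha : a ≤ i + 1) (hc : Commute (ascV v a i) (v (i + 2))) :
    ascV v (a + 1) (i + 2) * ascV v a (i + 1) =
      ascV v (a + 1) (i + 1) * ascV v a i * (v (i + 2) * v (i + 1)) := by
  rw [ascV_succ v ha, ascV_succ v (by omega : a + 1 ≤ i + 1 + 1), mul_assoc, ← mul_assoc (v _),
    ← hc.eq]
  simp only [mul_assoc]

end ProductsOfGenerators

namespace VSB

variable {n : ℕ}

lemma virE_eq {k : ℕ} (h₁ : 1 ≤ k) (h₂ : k ≤ n - 1) :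
    virE n k = PresentedMonoid.of (VSBrel n) (VSBgen.vir ⟨k - 1, by omega⟩) :=
  dif_pos ⟨h₁, h₂⟩

lemma tauE_eq {k : ℕ} (h₁ : 1 ≤ k) (h₂ : k ≤ n - 1) :
    tauE n k = PresentedMonoid.of (VSBrel n) (VSBgen.tau ⟨k - 1, by omega⟩) :=
  dif_pos ⟨h₁, h₂⟩

lemma virE_mul_self {k : ℕ} (h₁ : 1 ≤ k) (h₂ : k ≤ n - 1) : virE n k * virE n k = 1 := by
  rw [virE_eq h₁ h₂]
  exact PresentedMonoid.mk_eq_mk_of_rel (VSBrel.v_sq _)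

lemma virE_mul_tauE_succ_mul_virE {k : ℕ} (h₁ : 1 ≤ k) (h₂ : k + 1 ≤ n - 1) :
    virE n k * tauE n (k + 1) * virE n k = virE n (k + 1) * tauE n k * virE n (k + 1) := by
  rw [virE_eq h₁ (by omega), virE_eq (by omega) h₂, tauE_eq h₁ (by omega), tauE_eq (by omega) h₂]
  simpa [PresentedMonoid.of] using PresentedMonoid.mk_eq_mk_of_rel
    (VSBrel.vir_tau_vir (n := n) ⟨k - 1, by omega⟩ ⟨k, by omega⟩ (.inl (by simp; omega)))

lemma commute_virE_virE {j k : ℕ} (h₁ : 1 ≤ j) (h₂ : j + 1 < k) (h₃ : k ≤ n - 1) :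
    Commute (virE n j) (virE n k) := by
  rw [Commute, SemiconjBy, virE_eq h₁ (by omega), virE_eq (by omega) h₃]
  simpa [PresentedMonoid.of] using PresentedMonoid.mk_eq_mk_of_rel
    (VSBrel.far_comm (n := n) VSBgen.vir VSBgen.vir (by tauto) (by tauto)
      ⟨j - 1, by omega⟩ ⟨k - 1, by omega⟩ (.inl (by simp; omega)))

lemma tauE_succ_eq_conj {k : ℕ} (h₁ : 1 ≤ k) (h₂ : k + 1 ≤ n - 1) :
    tauE n (k + 1) = virE n k * virE n (k + 1) * tauE n k * virE n (k + 1) * virE n k := by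
  calc tauE n (k + 1)
      = virE n k * virE n k * tauE n (k + 1) * (virE n k * virE n k) := by
        rw [virE_mul_self h₁ (by omega), one_mul, mul_one]
    _ = virE n k * (virE n k * tauE n (k + 1) * virE n k) * virE n k := by
        simp only [mul_assoc]
    _ = _ := by
        rw [virE_mul_tauE_succ_mul_virE h₁ h₂]
        simp only [mul_assoc]

/-- Also holds for `i = 0`, which makes it provable by plain induction. -/
lemma tauE_succ_eq_detour {i : ℕ} (hi : i ≤ n - 2) :
    tauE n (i + 1) =
      descV (virE n) 1 i * descV (virE n) 2 (i + 1) * tauE n 1 *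
        (ascV (virE n) 2 (i + 1) * ascV (virE n) 1 i) := by
  induction i with
  | zero => simp [descV, ascV]
  | succ i ih =>
    have hfar : ∀ j, 1 ≤ j → j ≤ i → Commute (virE n j) (virE n (i + 2)) := fun j hj₁ hj₂ =>
      commute_virE_virE hj₁ (by omega) (by omega)
    rw [tauE_succ_eq_conj (by omega) (by omega), ih (by omega),
      descV_mul_descV_succ (by omega) (commute_descV_left hfar),
      ascV_succ_mul_ascV (by omega) (commute_ascV_left hfar)]
    simp only [mul_assoc]

end VSB

theorem VSB_detour_tau_general (n : ℕ) :
    ∀ i : ℕ, 1 ≤ i → i ≤ n - 2 →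
      VSB.tauE n (i + 1) =
        descV (VSB.virE n) 1 i * descV (VSB.virE n) 2 (i + 1) * VSB.tauE n 1 *
          ascV (VSB.virE n) 2 (i + 1) * ascV (VSB.virE n) 1 i :=
  fun _ _ hi => by rw [VSB.tauE_succ_eq_detour hi, ← mul_assoc]

/-- **Detour formula for the singular crossings in `VSB n`.**
For every `1 ≤ i ≤ n-2`,
`τ_{i+1} = (v_i ⋯ v₂v₁)(v_{i+1} ⋯ v₃v₂) τ₁ (v₂v₃ ⋯ v_{i+1})(v₁v₂ ⋯ v_i)`. -/
theorem VSB_detour_tau (n : ℕ) (hn : 2 ≤ n) :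
    ∀ i : ℕ, 1 ≤ i → i ≤ n - 2 →
      VSB.tauE n (i + 1) =
        descV (VSB.virE n) 1 i * descV (VSB.virE n) 2 (i + 1) * VSB.tauE n 1 *
          ascV (VSB.virE n) 2 (i + 1) * ascV (VSB.virE n) 1 i :=
  VSB_detour_tau_general n

end VSBpaper
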